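/- (Necessity of the δ < Δ/2 condition, counterexample.) Let X = {x₁, x₂, x₃} ⊂ ℝ² be the vertices of an equilateral triangle of side length l = 2√3, translated so that x₃ is at the origin, and let Y = {0, y₂} with ‖y₂‖ = l. With δ = 2 (note δ > Δ/2 = √3), there exists a rotation R(θ₀) such that ‖x₁ - R(θ₀) y₂‖ ≤ δ and ‖x₂ - R(θ₀) y₂‖ ≤ δ simultaneously; i.e., the two circles of radius 2 centered at x₁ and x₂ intersect at a point at distance l from the origin. -/

import Mathlib

/-!
Take `p = (x₁ + x₂) / √3`, on the bisector of the angle of the triangle at the origin. Since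
`⟪x₁, x₂⟫ = l² / 2`, we get `‖x₁ + x₂‖ = √3 l`, so `‖p‖ = l = ‖y₂‖` and some rotation carries `y₂`
to `p`; moreover `‖xᵢ - p‖² = (2 - √3) l² = 24 - 12√3 < 4`.
-/

open Complex in
theorem Complex.exists_exp_mul_I_mul_eq_of_norm_eq {y p : ℂ} (h : ‖p‖ = ‖y‖) :
    ∃ θ : ℝ, exp (θ * I) * y = p := by
  refine ⟨arg p - arg y, ?_⟩
  calc exp (↑(arg p - arg y) * I) * y
      = exp (arg p * I) / exp (arg y * I) * (‖y‖ * exp (arg y * I)) := by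
        rw [ofReal_sub, sub_mul, exp_sub, norm_mul_exp_arg_mul_I]
    _ = ‖p‖ * exp (arg p * I) := by rw [h]; field_simp [exp_ne_zero]
    _ = p := norm_mul_exp_arg_mul_I p

section Equilateral

variable {E : Type*} [NormedAddCommGroup E] [InnerProductSpace ℝ E] {x y : E} {l : ℝ}

open RealInnerProductSpace

theorem real_inner_eq_of_norm_eq_of_norm_sub_eq (hx : ‖x‖ = l) (hy : ‖y‖ = l)
    (hxy : ‖x - y‖ = l) : ⟪x, y⟫ = l ^ 2 / 2 := by
  have := norm_sub_sq_real x y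
  rw [hx, hy, hxy] at this
  linarith

theorem norm_add_eq_sqrt_three_mul_of_norm_eq_of_norm_sub_eq (hx : ‖x‖ = l) (hy : ‖y‖ = l)
    (hxy : ‖x - y‖ = l) : ‖x + y‖ = √3 * l := by
  have hl : 0 ≤ l := hx ▸ norm_nonneg x
  refine (sq_eq_sq₀ (norm_nonneg _) (by positivity)).1 ?_
  rw [norm_add_sq_real, hx, hy, real_inner_eq_of_norm_eq_of_norm_sub_eq hx hy hxy, mul_pow,
    Real.sq_sqrt zero_le_three]
  ring

theorem norm_inv_sqrt_three_smul_add_of_norm_eq_of_norm_sub_eq (hx : ‖x‖ = l) (hy : ‖y‖ = l)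
    (hxy : ‖x - y‖ = l) : ‖(√3)⁻¹ • (x + y)‖ = l := by
  rw [norm_smul, norm_add_eq_sqrt_three_mul_of_norm_eq_of_norm_sub_eq hx hy hxy, norm_inv,
    Real.norm_of_nonneg (Real.sqrt_nonneg 3)]
  field_simp

theorem norm_sub_inv_sqrt_three_smul_add_sq_of_norm_eq_of_norm_sub_eq (hx : ‖x‖ = l)
    (hy : ‖y‖ = l) (hxy : ‖x - y‖ = l) : ‖x - (√3)⁻¹ • (x + y)‖ ^ 2 = (2 - √3) * l ^ 2 := by
  have hinner : ⟪x, x + y⟫ = 3 * l ^ 2 / 2 := by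
    rw [inner_add_right, real_inner_self_eq_norm_sq, hx,
      real_inner_eq_of_norm_eq_of_norm_sub_eq hx hy hxy]
    ring
  rw [norm_sub_sq_real, norm_inv_sqrt_three_smul_add_of_norm_eq_of_norm_sub_eq hx hy hxy,
    real_inner_smul_right, hinner, hx]
  have h3 : √3 ^ 2 = 3 := Real.sq_sqrt zero_le_three
  field_simp
  linear_combination l ^ 2 * h3

theorem norm_sub_inv_sqrt_three_smul_add_le_two (hx : ‖x‖ = 2 * √3) (hy : ‖y‖ = 2 * √3)
    (hxy : ‖x - y‖ = 2 * √3) : ‖x - (√3)⁻¹ • (x + y)‖ ≤ 2 := by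
  have hsq := norm_sub_inv_sqrt_three_smul_add_sq_of_norm_eq_of_norm_sub_eq hx hy hxy
  have h3 : √3 ^ 2 = 3 := Real.sq_sqrt zero_le_three
  have h3_lower : 5 / 3 ≤ √3 := Real.le_sqrt_of_sq_le (by norm_num)
  refine (pow_le_pow_iff_left₀ (norm_nonneg _) zero_le_two two_ne_zero).1 ?_
  rw [hsq, mul_pow, h3]
  nlinarith

end Equilateral

/-- counterexample showing `δ < Δ/2` is necessary:
`x₃ = 0, x₁, x₂` are the vertices of an equilateral triangle of side `l = 2√3`
with one vertex at the origin, and `‖y₂‖ = l`.  With `δ = 2 > Δ/2 = √3`, there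
is a rotation `R(θ₀)` with `‖x₁ - R(θ₀) y₂‖ ≤ 2` and `‖x₂ - R(θ₀) y₂‖ ≤ 2`
simultaneously. -/
theorem stmt_9 (x₁ x₂ y₂ : ℂ)
    (h1 : ‖x₁‖ = 2 * Real.sqrt 3) (h2 : ‖x₂‖ = 2 * Real.sqrt 3)
    (h12 : ‖x₁ - x₂‖ = 2 * Real.sqrt 3)
    (hy : ‖y₂‖ = 2 * Real.sqrt 3) :
    ∃ θ₀ : ℝ, ‖x₁ - Complex.exp (θ₀ * Complex.I) * y₂‖ ≤ 2 ∧
      ‖x₂ - Complex.exp (θ₀ * Complex.I) * y₂‖ ≤ 2 := by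
  have hp : ‖(√3)⁻¹ • (x₁ + x₂)‖ = ‖y₂‖ := by
    rw [hy, norm_inv_sqrt_three_smul_add_of_norm_eq_of_norm_sub_eq h1 h2 h12]
  obtain ⟨θ, hθ⟩ := Complex.exists_exp_mul_I_mul_eq_of_norm_eq hp
  refine ⟨θ, ?_, ?_⟩ <;> rw [hθ]
  · exact norm_sub_inv_sqrt_three_smul_add_le_two h1 h2 h12
  · rw [add_comm]
    exact norm_sub_inv_sqrt_three_smul_add_le_two h2 h1 (by rwa [norm_sub_rev])
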